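/- For every odd positive integer k ≥ 3 and integer a with 0 < a < k, the sum over j from 1 to k-1 of tan(πj/k)·sin(2πaj/k) equals (−1)^(a+1)·k. -/

import Mathlib

/-!
Write `S a = ∑ j, tan (π j / k) sin (2π a j / k)` and `C m = ∑ j, cos (2π m j / k)`, both over
`1 ≤ j ≤ k - 1`. The identity `tan x (sin (s + 2x) + sin s) = cos s - cos (s + 2x)` gives
`S (a + 1) + S a = C a - C (a + 1)`. Summing the `k`-th roots of unity `ζ ^ (m j)` shows
`C m = -1` for `k ∤ m`, while `C 0 = k - 1` and `S 0 = 0`; hence `S 1 = k` and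
`S (a + 1) = - S a` for `0 < a < k - 1`. Oddness of `k` keeps `cos (π j / k)` away from `0`.
-/

open Finset Real

lemma tan_mul_sin_add_two_mul {x : ℝ} (hx : cos x ≠ 0) (s : ℝ) :
    tan x * sin (s + 2 * x) = cos s - cos (s + 2 * x) - tan x * sin s := by
  rw [tan_eq_sin_div_cos, sin_add, cos_add, sin_two_mul, cos_two_mul]
  field_simp
  linear_combination 2 * cos s * cos x * sin_sq_add_cos_sq x

lemma cos_pi_mul_div_ne_zero_of_odd {k : ℕ} (hk : Odd k) (j : ℕ) : cos (π * j / k) ≠ 0 := by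
  refine cos_ne_zero_iff.mpr fun n hn => ?_
  have hk0 : (k : ℝ) ≠ 0 := Nat.cast_ne_zero.mpr (Nat.ne_of_odd_add hk)
  have hreal : (2 * j : ℝ) = (2 * n + 1) * k := by
    field_simp at hn
    nlinarith [pi_pos]
  have hint : 2 * (j : ℤ) = (2 * n + 1) * k := by exact_mod_cast hreal
  have hodd : Odd ((2 * n + 1) * (k : ℤ)) := (odd_two_mul_add_one n).mul (by exact_mod_cast hk)
  exact Int.not_even_iff_odd.mpr hodd (hint ▸ even_two_mul _)

lemma sum_range_cos_two_pi_mul_div {k m : ℕ} (hkm : ¬k ∣ m) :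
    ∑ j ∈ range k, cos (2 * π * m * j / k) = 0 := by
  rcases Nat.eq_zero_or_pos k with rfl | hk
  · simp
  have hζ := Complex.isPrimitiveRoot_exp k hk.ne'
  set ζ := Complex.exp (2 * π * Complex.I / k)
  have hζm : ζ ^ m ≠ 1 := mt (hζ.pow_eq_one_iff_dvd m).mp hkm
  have hgeom : ∑ j ∈ range k, (ζ ^ m) ^ j = 0 := by
    rw [geom_sum_eq hζm, ← pow_mul, mul_comm, pow_mul, hζ.pow_eq_one, one_pow, sub_self, zero_div]
  have hre (j : ℕ) : ((ζ ^ m) ^ j).re = cos (2 * π * m * j / k) := by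
    rw [← pow_mul, ← Complex.exp_nat_mul, ← Complex.exp_ofReal_mul_I_re]
    congr 2
    push_cast
    ring
  simpa [hre, Complex.re_sum] using congrArg Complex.re hgeom

lemma sum_Icc_cos_two_pi_mul_div {k m : ℕ} (hk : 0 < k) (hkm : ¬k ∣ m) :
    ∑ j ∈ Icc 1 (k - 1), cos (2 * π * m * j / k) = -1 := by
  have hrange : range k = insert 0 (Icc 1 (k - 1)) := by
    ext j
    simp only [mem_range, mem_insert, mem_Icc]
    omega
  have := sum_range_cos_two_pi_mul_div hkm
  rw [hrange, sum_insert (by simp)] at this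
  simp only [CharP.cast_eq_zero, mul_zero, zero_div, cos_zero] at this
  linarith

lemma sum_tan_mul_sin_succ {k : ℕ} (hk : Odd k) (s : Finset ℕ) (a : ℕ) :
    ∑ j ∈ s, tan (π * j / k) * sin (2 * π * (a + 1 : ℕ) * j / k) =
      ∑ j ∈ s, cos (2 * π * a * j / k) - ∑ j ∈ s, cos (2 * π * (a + 1 : ℕ) * j / k) -
        ∑ j ∈ s, tan (π * j / k) * sin (2 * π * a * j / k) := by
  rw [← sum_sub_distrib, ← sum_sub_distrib]
  refine sum_congr rfl fun j _ => ?_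
  have harg : 2 * π * (a + 1 : ℕ) * j / k = 2 * π * a * j / k + 2 * (π * j / k) := by
    push_cast
    ring
  rw [harg, tan_mul_sin_add_two_mul (cos_pi_mul_div_ne_zero_of_odd hk j)]

theorem sum_tan_sin_general (a k : ℕ) (hk : Odd k) (ha : 0 < a) (hak : a < k) :
    ∑ j ∈ Finset.Icc 1 (k - 1), Real.tan (π * j / k) * Real.sin (2 * π * a * j / k) =
    (-1) ^ (a + 1) * k := by
  have hk0 : 0 < k := hk.pos
  have not_dvd {m : ℕ} (hm : 0 < m) (hmk : m < k) : ¬k ∣ m := Nat.not_dvd_of_pos_of_lt hm hmk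
  induction a, ha using Nat.le_induction with
  | base =>
    rw [sum_tan_mul_sin_succ hk, sum_Icc_cos_two_pi_mul_div (m := 0 + 1) hk0 (not_dvd one_pos hak)]
    simp [Nat.cast_sub hk0]
  | succ a ha ih =>
    rw [sum_tan_mul_sin_succ hk, ih (by omega), sum_Icc_cos_two_pi_mul_div hk0 (not_dvd ha (by omega)),
      sum_Icc_cos_two_pi_mul_div hk0 (not_dvd (by omega) hak), pow_succ]
    ring

theorem sum_tan_sin (a k : ℕ) (hk : Odd k) (hk3 : 3 ≤ k) (ha : 0 < a) (hak : a < k) :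
    ∑ j ∈ Finset.Icc 1 (k - 1), Real.tan (π * j / k) * Real.sin (2 * π * a * j / k) =
    (-1) ^ (a + 1) * k :=
  sum_tan_sin_general a k hk ha hak
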